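/- arXiv:2401.15727 — 5 statements merged into one kernel-verified Lean document; each statement's English description precedes it below -/
import Mathlib

section
/- If Q is twice continuously differentiable and attains a local minimum at t_1 and a local maximum at t_2 (with Q'(t_1) = Q'(t_2) = 0, Q''(t_1) > 0, Q''(t_2) < 0), then there exists τ between t_1 and t_2 such that Q''(τ) = (Q'(τ))² (η − e^{-Q(τ)})/(η + e^{-Q(τ)}), i.e. l_m has an inflection point at τ. -/
open Real Set

/-- If `Q` is twice continuously differentiable, with `Q'(t₁) = Q'(t₂) = 0`,
`Q''(t₁) > 0` and `Q''(t₂) < 0`, then there is `τ` between `t₁` and `t₂` with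
`Q''(τ) = Q'(τ)² (η − e^{-Q(τ)})/(η + e^{-Q(τ)})`, i.e. an inflection point of `l_m`. -/
theorem multisigmoidal_inflection_exists
    (η : ℝ) (hη : 0 < η)
    (Q Q' Q'' : ℝ → ℝ)
    (hQ : ∀ t, HasDerivAt Q (Q' t) t)
    (hQ' : ∀ t, HasDerivAt Q' (Q'' t) t)
    (hQ''cont : Continuous Q'')
    (t₁ t₂ : ℝ)
    (h₁ : Q' t₁ = 0) (h₂ : Q' t₂ = 0)
    (h₁'' : 0 < Q'' t₁) (h₂'' : Q'' t₂ < 0) :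
    ∃ τ ∈ uIcc t₁ t₂,
      Q'' τ = (Q' τ) ^ 2 * (η - Real.exp (-Q τ)) / (η + Real.exp (-Q τ)) := by
  set F : ℝ → ℝ := fun t =>
    Q'' t - (Q' t) ^ 2 * (η - Real.exp (-Q t)) / (η + Real.exp (-Q t)) with hF
  have hQcont : Continuous Q := Differentiable.continuous (fun t => (hQ t).differentiableAt)
  have hQ'cont : Continuous Q' := Differentiable.continuous (fun t => (hQ' t).differentiableAt)
  have hden : ∀ t, η + Real.exp (-Q t) ≠ 0 := fun t =>
    ne_of_gt (by positivity)
  have hFcont : Continuous F := by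
    apply hQ''cont.sub
    exact ((hQ'cont.pow 2).mul
      (continuous_const.sub (Real.continuous_exp.comp hQcont.neg))).div
      (continuous_const.add (Real.continuous_exp.comp hQcont.neg)) hden
  have hF1 : F t₁ = Q'' t₁ := by simp [hF, h₁]
  have hF2 : F t₂ = Q'' t₂ := by simp [hF, h₂]
  have h0 : (0 : ℝ) ∈ uIcc (F t₁) (F t₂) := by
    rw [hF1, hF2]
    exact mem_uIcc.2 (Or.inr ⟨h₂''.le, h₁''.le⟩)
  obtain ⟨τ, hτ, hτ0⟩ := intermediate_value_uIcc (hFcont.continuousOn (s := uIcc t₁ t₂)) h0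
  exact ⟨τ, hτ, by have := hτ0; simp only [hF] at this; linarith⟩
end

section
/- Let ψ(t) = exp(−∫_0^t (λ(τ) − μ(τ))dτ) and φ(t) = ∫_0^t λ(τ)ψ(τ)dτ. If λ(t) = A Q'(t)e^{-Q(t)}/(η + e^{-Q(t)}) and λ(t) − μ(t) = Q'(t)e^{-Q(t)}/(η + e^{-Q(t)}) with Q(0) = 0, then φ(t) = A(1 − e^{-Q(t)})/(η + 1), and consequently the variance Var(t) = n_0 (ψ(t) + 2φ(t) − 1)/ψ(t)² equals n_0 (η+1)(2A − 1)(1 − e^{-Q(t)})/(η + e^{-Q(t)})². -/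
open Real

/-- With `ψ(t) = exp(−∫₀ᵗ (λ−μ))` and `φ(t) = ∫₀ᵗ λψ`, if
`λ(t) = A Q'(t)e^{-Q(t)}/(η+e^{-Q(t)})` and `λ(t) − μ(t) = Q'(t)e^{-Q(t)}/(η+e^{-Q(t)})`
with `Q(0) = 0`, then `φ(t) = A(1 − e^{-Q(t)})/(η+1)` and the variance
`Var(t) = n₀(ψ(t) + 2φ(t) − 1)/ψ(t)²` equals
`n₀(η+1)(2A − 1)(1 − e^{-Q(t)})/(η+e^{-Q(t)})²`. -/
theorem variance_case_a
    (η A n₀ : ℝ) (hη : 0 < η) (hA : 0 ≤ A) (hn₀ : 0 < n₀)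
    (Q Q' : ℝ → ℝ) (hQ : ∀ t, HasDerivAt Q (Q' t) t)
    (hQ'cont : Continuous Q') (hQ0 : Q 0 = 0)
    (lam mu : ℝ → ℝ) (hlamcont : Continuous lam) (hmucont : Continuous mu)
    (hlam : ∀ t, lam t = A * (Q' t * Real.exp (-Q t) / (η + Real.exp (-Q t))))
    (hnet : ∀ t, lam t - mu t = Q' t * Real.exp (-Q t) / (η + Real.exp (-Q t)))
    (ψ φ : ℝ → ℝ)
    (hψ : ∀ t, ψ t = Real.exp (-(∫ τ in (0:ℝ)..t, (lam τ - mu τ))))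
    (hφ : ∀ t, φ t = ∫ τ in (0:ℝ)..t, lam τ * ψ τ) :
    ∀ t, 0 ≤ t →
      φ t = A * (1 - Real.exp (-Q t)) / (η + 1)
      ∧ n₀ * (ψ t + 2 * φ t - 1) / (ψ t) ^ 2 =
          n₀ * (η + 1) * (2 * A - 1) * (1 - Real.exp (-Q t)) /
            (η + Real.exp (-Q t)) ^ 2 := by
  have hpos : ∀ t, 0 < η + Real.exp (-Q t) := fun t =>
    add_pos hη (Real.exp_pos _)
  -- derivative of −log(η + e^{−Q})
  have hg : ∀ t, HasDerivAt (fun s => -Real.log (η + Real.exp (-Q s)))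
      (lam t - mu t) t := by
    intro t
    have h1 : HasDerivAt (fun s => η + Real.exp (-Q s))
        (Real.exp (-Q t) * (-Q' t)) t := by
      have := ((hQ t).neg).exp
      simpa using (this.const_add η)
    have h2 := (h1.log (ne_of_gt (hpos t))).neg
    rw [hnet t]
    refine h2.congr_deriv ?_
    ring
  -- closed form for ψ
  have hψval : ∀ t, ψ t = (η + Real.exp (-Q t)) / (η + 1) := by
    intro t
    have hint : (∫ τ in (0:ℝ)..t, (lam τ - mu τ)) =
        (-Real.log (η + Real.exp (-Q t))) - (-Real.log (η + Real.exp (-Q 0))) := by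
      exact intervalIntegral.integral_eq_sub_of_hasDerivAt
        (fun s _ => hg s) ((hlamcont.sub hmucont).intervalIntegrable 0 t)
    rw [hψ t, hint, hQ0]
    simp only [neg_zero, Real.exp_zero, neg_sub, neg_neg]
    rw [show -Real.log (η + 1) - -Real.log (η + Real.exp (-Q t)) =
      Real.log (η + Real.exp (-Q t)) - Real.log (η + 1) by ring]
    rw [Real.exp_sub, Real.exp_log (hpos t), Real.exp_log (by linarith : (0:ℝ) < η + 1)]
  -- closed form for φ
  have hφval : ∀ t, φ t = A * (1 - Real.exp (-Q t)) / (η + 1) := by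
    intro t
    have hinteg : ∀ τ, lam τ * ψ τ = A * (Q' τ * Real.exp (-Q τ)) / (η + 1) := by
      intro τ
      rw [hlam τ, hψval τ]
      have h1 := (hpos τ).ne'
      field_simp
    have hF : ∀ s, HasDerivAt (fun u => A * (1 - Real.exp (-Q u)) / (η + 1))
        (A * (Q' s * Real.exp (-Q s)) / (η + 1)) s := by
      intro s
      have h1 : HasDerivAt (fun u => 1 - Real.exp (-Q u))
          (Q' s * Real.exp (-Q s)) s := by
        have := ((hQ s).neg).exp
        have h2 := (this.const_sub 1)
        exact h2.congr_deriv (by simp only [Pi.neg_apply]; ring)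
      have := (h1.const_mul A).div_const (η + 1)
      simpa [mul_div_assoc] using this
    have hcont : Continuous fun τ => A * (Q' τ * Real.exp (-Q τ)) / (η + 1) := by
      have hQc : Continuous Q := continuous_iff_continuousAt.2 fun s => (hQ s).continuousAt
      continuity
    rw [hφ t]
    calc (∫ τ in (0:ℝ)..t, lam τ * ψ τ)
        = ∫ τ in (0:ℝ)..t, A * (Q' τ * Real.exp (-Q τ)) / (η + 1) := by
          apply intervalIntegral.integral_congr
          intro τ _; exact hinteg τ
      _ = A * (1 - Real.exp (-Q t)) / (η + 1) -
            A * (1 - Real.exp (-Q 0)) / (η + 1) := by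
          exact intervalIntegral.integral_eq_sub_of_hasDerivAt
            (fun s _ => hF s) (hcont.intervalIntegrable 0 t)
      _ = A * (1 - Real.exp (-Q t)) / (η + 1) := by
          rw [hQ0]; simp
  intro t ht
  refine ⟨hφval t, ?_⟩
  rw [hψval t, hφval t]
  have h1 := (hpos t).ne'
  have h2 : (η + 1 : ℝ) ≠ 0 := by linarith
  field_simp
  ring
end

section
/- Let ψ(t) = exp(−∫_0^t (λ(τ) − μ(τ))dτ) and φ(t) = ∫_0^t λ(τ)ψ(τ)dτ. If λ(t) = Q'(t) and λ(t) − μ(t) = Q'(t)e^{-Q(t)}/(η + e^{-Q(t)}) with Q(0) = 0, then φ(t) = (η Q(t) + 1 − e^{-Q(t)})/(η + 1), and hence Var(t) = n_0(ψ(t) + 2φ(t) − 1)/ψ(t)² = n_0 (η+1)(1 − e^{-Q(t)} + 2η Q(t))/(η + e^{-Q(t)})². -/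
open Real

/-- With `ψ(t) = exp(−∫₀ᵗ (λ−μ))` and `φ(t) = ∫₀ᵗ λψ`, if `λ(t) = Q'(t)` and
`λ(t) − μ(t) = Q'(t)e^{-Q(t)}/(η+e^{-Q(t)})` with `Q(0) = 0`, then
`φ(t) = (η Q(t) + 1 − e^{-Q(t)})/(η+1)` and
`Var(t) = n₀(ψ(t) + 2φ(t) − 1)/ψ(t)² = n₀(η+1)(1 − e^{-Q(t)} + 2η Q(t))/(η+e^{-Q(t)})²`. -/
theorem variance_case_b
    (η n₀ : ℝ) (hη : 0 < η) (hn₀ : 0 < n₀)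
    (Q Q' : ℝ → ℝ) (hQ : ∀ t, HasDerivAt Q (Q' t) t)
    (hQ'cont : Continuous Q') (hQ0 : Q 0 = 0)
    (lam mu : ℝ → ℝ) (hlamcont : Continuous lam) (hmucont : Continuous mu)
    (hlam : ∀ t, lam t = Q' t)
    (hnet : ∀ t, lam t - mu t = Q' t * Real.exp (-Q t) / (η + Real.exp (-Q t)))
    (ψ φ : ℝ → ℝ)
    (hψ : ∀ t, ψ t = Real.exp (-(∫ τ in (0:ℝ)..t, (lam τ - mu τ))))
    (hφ : ∀ t, φ t = ∫ τ in (0:ℝ)..t, lam τ * ψ τ) :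
    ∀ t, 0 ≤ t →
      φ t = (η * Q t + 1 - Real.exp (-Q t)) / (η + 1)
      ∧ n₀ * (ψ t + 2 * φ t - 1) / (ψ t) ^ 2 =
          n₀ * (η + 1) * (1 - Real.exp (-Q t) + 2 * η * Q t) /
            (η + Real.exp (-Q t)) ^ 2 := by

  have hQcont : Continuous Q := continuous_iff_continuousAt.2 fun t => (hQ t).continuousAt
  have hpos : ∀ s : ℝ, 0 < η + Real.exp (-Q s) := fun s => by positivity
  have hη1 : (η + 1) ≠ 0 := by positivity
  have hF : ∀ s : ℝ, HasDerivAt (fun u => -Real.log (η + Real.exp (-Q u)))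
      (Q' s * Real.exp (-Q s) / (η + Real.exp (-Q s))) s := by
    intro s
    have h1 : HasDerivAt (fun u => η + Real.exp (-Q u)) (Real.exp (-Q s) * -(Q' s)) s :=
      (((hQ s).neg).exp).const_add η
    have h2 := (h1.log (hpos s).ne').neg
    refine h2.congr_deriv ?_
    ring
  have hcontf' : Continuous (fun s => Q' s * Real.exp (-Q s) / (η + Real.exp (-Q s))) := by
    apply Continuous.div (by continuity) (by continuity) fun s => (hpos s).ne'
  have hψeq : ∀ s : ℝ, ψ s = (η + Real.exp (-Q s)) / (η + 1) := by
    intro s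
    rw [hψ]
    have hint : (∫ τ in (0:ℝ)..s, (lam τ - mu τ))
        = -Real.log (η + Real.exp (-Q s)) - -Real.log (η + Real.exp (-Q 0)) := by
      simp only [hnet]
      exact intervalIntegral.integral_eq_sub_of_hasDerivAt (fun x _ => hF x)
        (hcontf'.intervalIntegrable 0 s)
    rw [hint, hQ0]
    simp only [neg_zero, Real.exp_zero]
    rw [show -(-Real.log (η + Real.exp (-Q s)) - -Real.log (η + 1))
        = Real.log (η + Real.exp (-Q s)) - Real.log (η + 1) by ring]
    rw [Real.exp_sub, Real.exp_log (hpos s), Real.exp_log (by positivity)]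
  have hG : ∀ s : ℝ, HasDerivAt (fun u => (η * Q u + 1 - Real.exp (-Q u)) / (η + 1))
      (Q' s * ((η + Real.exp (-Q s)) / (η + 1))) s := by
    intro s
    have h1 : HasDerivAt (fun u => η * Q u + 1 - Real.exp (-Q u))
        (η * Q' s - Real.exp (-Q s) * -(Q' s)) s :=
      (((hQ s).const_mul η).add_const 1).sub (((hQ s).neg).exp)
    have h2 := h1.div_const (η + 1)
    refine h2.congr_deriv ?_
    ring
  have hφeq : ∀ s : ℝ, φ s = (η * Q s + 1 - Real.exp (-Q s)) / (η + 1) := by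
    intro s
    rw [hφ]
    have hint : (∫ τ in (0:ℝ)..s, lam τ * ψ τ)
        = (η * Q s + 1 - Real.exp (-Q s)) / (η + 1)
          - (η * Q 0 + 1 - Real.exp (-Q 0)) / (η + 1) := by
      have : ∀ τ : ℝ, lam τ * ψ τ = Q' τ * ((η + Real.exp (-Q τ)) / (η + 1)) := by
        intro τ; rw [hlam, hψeq]
      simp only [this]
      have hc : Continuous fun τ => Q' τ * ((η + Real.exp (-Q τ)) / (η + 1)) :=
        hQ'cont.mul (((continuous_const.add (hQcont.neg.rexp))).div_const (η + 1))
      exact intervalIntegral.integral_eq_sub_of_hasDerivAt (fun x _ => hG x)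
        (hc.intervalIntegrable 0 s)
    rw [hint, hQ0]
    simp
  intro t _
  refine ⟨hφeq t, ?_⟩
  rw [hφeq t, hψeq t]
  field_simp
  ring
end

section
/- For quadratic rates b_n = λ_1 + λ_2 n + λ_3 n², d_n = μ_1 + μ_2 n + μ_3 n² with μ_3 = λ_3 > 0 and all coefficients positive, the limit lim_{n→∞} n(b_{n+1}/d_{n+1} − 1) equals (λ_2 − μ_2)/μ_3; consequently, by Raabe's test, the series Σ_{n≥0} Π_{i=0}^n (d_i/b_i) converges when μ_2 + μ_3 < λ_2 and diverges when μ_2 + μ_3 > λ_2. -/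
open Real Finset Filter

open Topology

lemma aux_tendsto (A B C D E : ℝ) (hE : 0 < E) (hC : 0 < C) (hD : 0 < D) :
    Tendsto (fun n : ℕ => (n : ℝ) * ((A + B*(n+1) + E*((n:ℝ)+1)^2)/(C + D*(n+1) + E*((n:ℝ)+1)^2) - 1)) atTop
      (nhds ((B - D)/E)) := by
  have key : Tendsto (fun x : ℝ => ((A-C)*x + (B-D)*(1+x)) / (C*x^2 + D*(x+x^2) + E*(1+x)^2)) (nhds 0) (nhds ((B-D)/E)) := by
    have : ContinuousAt (fun x : ℝ => ((A-C)*x + (B-D)*(1+x)) / (C*x^2 + D*(x+x^2) + E*(1+x)^2)) 0 := by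
      apply ContinuousAt.div
      · fun_prop
      · fun_prop
      · norm_num; positivity
    have h0 : ((A-C)*(0:ℝ) + (B-D)*(1+0)) / (C*0^2 + D*(0+0^2) + E*(1+0)^2) = (B-D)/E := by
      norm_num
    simpa [ContinuousAt, h0] using this
  have comp := key.comp tendsto_one_div_atTop_nhds_zero_nat
  apply comp.congr'
  filter_upwards [eventually_ge_atTop 1] with n hn
  have hn0 : (0:ℝ) < n := by exact_mod_cast hn
  have hden : (0:ℝ) < C + D*(n+1) + E*((n:ℝ)+1)^2 := by positivity
  simp only [Function.comp_apply]
  field_simp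
  ring


lemma aux_rpow (p : ℝ) :
    Tendsto (fun n : ℕ => (n : ℝ) * (((n:ℝ)/((n:ℝ)+1)) ^ p - 1)) atTop (nhds (-p)) := by
  have hderiv : HasDerivAt (fun x : ℝ => x ^ (-p)) (-p) 1 := by
    have := Real.hasDerivAt_rpow_const (x := (1:ℝ)) (p := -p) (Or.inl one_ne_zero)
    simpa using this
  have hslope := hasDerivAt_iff_tendsto_slope.mp hderiv
  have hx : Tendsto (fun n : ℕ => 1 + 1/(n:ℝ)) atTop (𝓝[≠] (1:ℝ)) := by
    apply tendsto_nhdsWithin_of_tendsto_nhds_of_eventually_within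
    · simpa using (tendsto_one_div_atTop_nhds_zero_nat.const_add (1:ℝ))
    · filter_upwards [eventually_ge_atTop 1] with n hn
      have h : (0:ℝ) < 1/(n:ℝ) := by
        have : (0:ℝ) < n := by exact_mod_cast hn
        positivity
      simp only [Set.mem_compl_iff, Set.mem_singleton_iff]
      intro hcontra; nlinarith
  have comp := hslope.comp hx
  apply comp.congr'
  filter_upwards [eventually_ge_atTop 1] with n hn
  have hn0 : (0:ℝ) < n := by exact_mod_cast hn
  have hq : (0:ℝ) < (n:ℝ)/((n:ℝ)+1) := by positivity
  have hfrac : (1:ℝ) + 1/(n:ℝ) = ((n:ℝ)/((n:ℝ)+1))⁻¹ := by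
    field_simp
  have h1 : ((1:ℝ) + 1/(n:ℝ)) ^ (-p) = ((n:ℝ)/((n:ℝ)+1)) ^ p := by
    rw [hfrac, Real.inv_rpow hq.le, ← Real.rpow_neg hq.le, neg_neg]
  simp only [Function.comp_apply, slope_def_field]
  rw [h1, Real.one_rpow, show (1:ℝ)+1/(n:ℝ)-1 = 1/(n:ℝ) by ring, div_div_eq_mul_div, div_one, mul_comm]

lemma aux_rpow_step (p : ℝ) (n : ℕ) (hn : 1 ≤ n) :
    ((n:ℝ)+1) ^ (-p) = (n:ℝ) ^ (-p) * (((n:ℝ)/((n:ℝ)+1)) ^ p) := by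
  have hn0 : (0:ℝ) < n := by exact_mod_cast hn
  have h1 : (0:ℝ) < (n:ℝ)+1 := by positivity
  rw [Real.rpow_neg hn0.le, Real.rpow_neg h1.le, Real.div_rpow hn0.le h1.le]
  have e1 : (n:ℝ)^p ≠ 0 := (Real.rpow_pos_of_pos hn0 p).ne'
  have e2 : ((n:ℝ)+1)^p ≠ 0 := (Real.rpow_pos_of_pos h1 p).ne'
  field_simp

lemma raabe_summable (r : ℕ → ℝ) (hr : ∀ n, 0 < r n) (L : ℝ) (hL : 1 < L)
    (hlim : Tendsto (fun n : ℕ => (n:ℝ) * (r (n+1) - 1)) atTop (nhds (-L))) :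
    Summable (fun n : ℕ => ∏ i ∈ Finset.range (n + 1), r i) := by
  set P : ℕ → ℝ := fun n => ∏ i ∈ Finset.range (n + 1), r i with hPdef
  have hP : ∀ n, 0 < P n := fun n => Finset.prod_pos fun i _ => hr i
  set p := (1 + L) / 2 with hpdef
  have hp1 : 1 < p := by rw [hpdef]; linarith
  have hpL : p < L := by rw [hpdef]; linarith
  -- eventual comparison
  have hcomp : ∀ᶠ n in atTop, r (n+1) ≤ ((n:ℝ)/((n:ℝ)+1)) ^ p := by
    have hsub := hlim.sub (aux_rpow p)
    have hev := hsub.eventually_lt_const (show -L - -p < 0 by linarith)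
    filter_upwards [hev, eventually_ge_atTop 1] with n h1 h2
    have hn0 : (0:ℝ) < n := by exact_mod_cast h2
    nlinarith [h1]
  obtain ⟨N₀, hN₀⟩ := eventually_atTop.mp hcomp
  set M := max N₀ 1 with hMdef
  have hM1 : 1 ≤ M := le_max_right _ _
  have hMN : N₀ ≤ M := le_max_left _ _
  set q : ℕ → ℝ := fun n => (n:ℝ) ^ (-p) with hqdef
  have hqpos : ∀ n, 1 ≤ n → 0 < q n := by
    intro n hn
    have : (0:ℝ) < n := by exact_mod_cast hn
    exact Real.rpow_pos_of_pos this _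
  have key : ∀ k, P (M + k) ≤ (P M / q M) * q (M + k) := by
    intro k
    induction k with
    | zero =>
      have := (hqpos M hM1).ne'
      rw [Nat.add_zero, div_mul_cancel₀ _ this]
    | succ k ih =>
      have h1le : 1 ≤ M + k := le_trans hM1 (Nat.le_add_right _ _)
      have hcompk : r (M + k + 1) ≤ (((M+k:ℕ):ℝ)/(((M+k:ℕ):ℝ)+1)) ^ p :=
        hN₀ (M+k) (le_trans hMN (Nat.le_add_right _ _))
      have hstep : P (M + (k+1)) = P (M + k) * r (M + k + 1) :=
        Finset.prod_range_succ r (M + k + 1)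
      have hqstep : q (M + (k+1)) = q (M + k) * ((((M+k:ℕ):ℝ))/(((M+k:ℕ):ℝ)+1)) ^ p := by
        have h := aux_rpow_step p (M+k) h1le
        show ((M + (k+1) : ℕ):ℝ) ^ (-p) = ((M+k:ℕ):ℝ) ^ (-p) * ((((M+k:ℕ):ℝ))/(((M+k:ℕ):ℝ)+1)) ^ p
        push_cast at h ⊢
        rw [show (M:ℝ)+((k:ℝ)+1) = (M:ℝ)+(k:ℝ)+1 by ring]
        exact h
      calc P (M + (k+1)) = P (M + k) * r (M + k + 1) := hstep
        _ ≤ ((P M / q M) * q (M + k)) * ((((M+k:ℕ):ℝ))/(((M+k:ℕ):ℝ)+1)) ^ p :=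
            mul_le_mul ih hcompk (hr _).le
              (mul_nonneg (div_nonneg (hP M).le (hqpos M hM1).le) (hqpos _ h1le).le)
        _ = (P M / q M) * q (M + (k+1)) := by rw [hqstep]; ring
  rw [← summable_nat_add_iff M]
  have hmaj : Summable (fun k : ℕ => (P M / q M) * q (k + M)) := by
    have h1 : Summable (fun n : ℕ => (n:ℝ) ^ (-p)) :=
      Real.summable_nat_rpow.2 (by linarith)
    exact ((summable_nat_add_iff M).2 h1).mul_left _
  apply Summable.of_nonneg_of_le (fun k => (hP _).le) (fun k => ?_) hmaj
  rw [add_comm]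
  exact key k

lemma raabe_not_summable (r : ℕ → ℝ) (hr : ∀ n, 0 < r n) (L : ℝ) (hL : L < 1)
    (hlim : Tendsto (fun n : ℕ => (n:ℝ) * (r (n+1) - 1)) atTop (nhds (-L))) :
    ¬ Summable (fun n : ℕ => ∏ i ∈ Finset.range (n + 1), r i) := by
  intro hsum
  set P : ℕ → ℝ := fun n => ∏ i ∈ Finset.range (n + 1), r i with hPdef
  have hP : ∀ n, 0 < P n := fun n => Finset.prod_pos fun i _ => hr i
  set p := (1 + L) / 2 with hpdef
  have hp1 : p < 1 := by rw [hpdef]; linarith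
  have hpL : L < p := by rw [hpdef]; linarith
  have hcomp : ∀ᶠ n : ℕ in atTop, ((n:ℝ)/((n:ℝ)+1)) ^ p ≤ r (n+1) := by
    have hsub := (aux_rpow p).sub hlim
    have hev := hsub.eventually_lt_const (show -p - -L < 0 by linarith)
    filter_upwards [hev, eventually_ge_atTop 1] with n h1 h2
    have hn0 : (0:ℝ) < n := by exact_mod_cast h2
    nlinarith [h1]
  obtain ⟨N₀, hN₀⟩ := eventually_atTop.mp hcomp
  set M := max N₀ 1 with hMdef
  have hM1 : 1 ≤ M := le_max_right _ _
  have hMN : N₀ ≤ M := le_max_left _ _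
  set q : ℕ → ℝ := fun n => (n:ℝ) ^ (-p) with hqdef
  have hqpos : ∀ n, 1 ≤ n → 0 < q n := by
    intro n hn
    have : (0:ℝ) < n := by exact_mod_cast hn
    exact Real.rpow_pos_of_pos this _
  have key : ∀ k, (P M / q M) * q (M + k) ≤ P (M + k) := by
    intro k
    induction k with
    | zero =>
      have := (hqpos M hM1).ne'
      rw [Nat.add_zero, div_mul_cancel₀ _ this]
    | succ k ih =>
      have h1le : 1 ≤ M + k := le_trans hM1 (Nat.le_add_right _ _)
      have hcompk : (((M+k:ℕ):ℝ)/(((M+k:ℕ):ℝ)+1)) ^ p ≤ r (M + k + 1) :=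
        hN₀ (M+k) (le_trans hMN (Nat.le_add_right _ _))
      have hstep : P (M + (k+1)) = P (M + k) * r (M + k + 1) :=
        Finset.prod_range_succ r (M + k + 1)
      have hqstep : q (M + (k+1)) = q (M + k) * ((((M+k:ℕ):ℝ))/(((M+k:ℕ):ℝ)+1)) ^ p := by
        have h := aux_rpow_step p (M+k) h1le
        show ((M + (k+1) : ℕ):ℝ) ^ (-p) = ((M+k:ℕ):ℝ) ^ (-p) * ((((M+k:ℕ):ℝ))/(((M+k:ℕ):ℝ)+1)) ^ p
        push_cast at h ⊢
        rw [show (M:ℝ)+((k:ℝ)+1) = (M:ℝ)+(k:ℝ)+1 by ring]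
        exact h
      have hMk0 : (0:ℝ) < ((M+k:ℕ):ℝ) := by exact_mod_cast h1le
      have hcpos : (0:ℝ) < (((M+k:ℕ):ℝ)/(((M+k:ℕ):ℝ)+1)) ^ p :=
        Real.rpow_pos_of_pos (by positivity) p
      calc (P M / q M) * q (M + (k+1))
          = ((P M / q M) * q (M + k)) * ((((M+k:ℕ):ℝ))/(((M+k:ℕ):ℝ)+1)) ^ p := by
            rw [hqstep]; ring
        _ ≤ P (M + k) * r (M + k + 1) :=
            mul_le_mul ih hcompk hcpos.le (hP _).le
        _ = P (M + (k+1)) := hstep.symm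
  -- derive summability of the rpow series, contradiction
  have hC : 0 < P M / q M := div_pos (hP M) (hqpos M hM1)
  have hsum' : Summable (fun k : ℕ => P (k + M)) := (summable_nat_add_iff M).2 hsum
  have hsum2 : Summable (fun k : ℕ => (P M / q M) * q (k + M)) := by
    apply Summable.of_nonneg_of_le (fun k => ?_) (fun k => ?_) hsum'
    · exact (mul_nonneg hC.le (hqpos _ (le_trans hM1 (Nat.le_add_left _ _))).le)
    · rw [add_comm]; exact key k
  have hsum3 : Summable (fun k : ℕ => q (k + M)) := by
    have := hsum2.mul_left (P M / q M)⁻¹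
    refine this.congr fun k => ?_
    rw [inv_mul_cancel_left₀ hC.ne']
  have hsum4 : Summable (fun n : ℕ => (n:ℝ) ^ (-p)) := (summable_nat_add_iff M).1 hsum3
  have := Real.summable_nat_rpow.1 hsum4
  linarith

/-- For quadratic rates with `μ₃ = λ₃ > 0`,
`lim_{n→∞} n(b_{n+1}/d_{n+1} − 1) = (λ₂ − μ₂)/μ₃`; consequently (Raabe's test)
the series `Σ_{n≥0} Π_{i=0}^n (d_i/b_i)` converges when `μ₂ + μ₃ < λ₂` and
diverges when `μ₂ + μ₃ > λ₂`. -/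
theorem quadratic_rates_raabe
    (l₁ l₂ m₁ m₂ m₃ : ℝ)
    (hl₁ : 0 < l₁) (hl₂ : 0 < l₂) (hm₁ : 0 < m₁) (hm₂ : 0 < m₂) (hm₃ : 0 < m₃)
    (b d : ℕ → ℝ)
    (hb : ∀ n : ℕ, b n = l₁ + l₂ * n + m₃ * (n : ℝ) ^ 2)
    (hd : ∀ n : ℕ, d n = m₁ + m₂ * n + m₃ * (n : ℝ) ^ 2) :
    Tendsto (fun n : ℕ => (n : ℝ) * (b (n + 1) / d (n + 1) - 1)) atTop
      (nhds ((l₂ - m₂) / m₃))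
    ∧ (m₂ + m₃ < l₂ → Summable (fun n : ℕ => ∏ i ∈ Finset.range (n + 1), d i / b i))
    ∧ (m₂ + m₃ > l₂ → ¬ Summable (fun n : ℕ => ∏ i ∈ Finset.range (n + 1), d i / b i)) := by
  have hbpos : ∀ n : ℕ, 0 < b n := by
    intro n; rw [hb]; positivity
  have hdpos : ∀ n : ℕ, 0 < d n := by
    intro n; rw [hd]; positivity
  have hr : ∀ n : ℕ, 0 < d n / b n := fun n => div_pos (hdpos n) (hbpos n)
  have hlim : Tendsto (fun n : ℕ => (n : ℝ) * (d (n + 1) / b (n + 1) - 1)) atTop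
      (nhds (-((l₂ - m₂) / m₃))) := by
    have h := aux_tendsto m₁ m₂ l₁ l₂ m₃ hm₃ hl₁ hl₂
    rw [show -((l₂ - m₂) / m₃) = (m₂ - l₂) / m₃ by ring]
    refine h.congr fun n => ?_
    rw [hb, hd]; push_cast; ring_nf
  refine ⟨?_, ?_, ?_⟩
  · have h := aux_tendsto l₁ l₂ m₁ m₂ m₃ hm₃ hm₁ hm₂
    refine h.congr fun n => ?_
    rw [hb, hd]; push_cast; ring_nf
  · intro hlt
    exact raabe_summable _ hr _ ((one_lt_div hm₃).2 (by linarith)) hlim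
  · intro hgt
    exact raabe_not_summable _ hr _ ((div_lt_one hm₃).2 (by linarith)) hlim
end

section
/- For the lognormal process X(t) = x_0 exp[H(t_0,t) + σ(W(t) − W(t_0))] with H as above, the mean m(t) = E[X(t)] = x_0 (η + e^{-Q(t_0)})/(η + e^{-Q(t)}) satisfies the multi-sigmoidal logistic ODE m'(t) = h(t)m(t) with h(t) = Q'(t)e^{-Q(t)}/(η + e^{-Q(t)}). -/
open Real MeasureTheory ProbabilityTheory

lemma gaussianReal_integral_exp (σ : ℝ) (v : NNReal) :
    ∫ x, Real.exp (σ * x) ∂(gaussianReal 0 v) = Real.exp (σ ^ 2 * v / 2) := by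
  by_cases hv : v = 0
  · subst hv
    simp [gaussianReal_zero_var, integral_dirac]
  · have hv' : (v : ℝ) ≠ 0 := by exact_mod_cast hv
    have hvpos : (0 : ℝ) < v := lt_of_le_of_ne v.coe_nonneg (Ne.symm hv')
    rw [gaussianReal_of_var_ne_zero 0 hv]
    have hpdf : gaussianPDF 0 v = fun x => ((gaussianPDFReal 0 v x).toNNReal : ENNReal) := by
      funext x
      rw [gaussianPDF_def]
      rfl
    rw [hpdf, integral_withDensity_eq_integral_smul
      ((measurable_gaussianPDFReal 0 v).real_toNNReal)]
    have key : ∀ x : ℝ, (gaussianPDFReal 0 v x).toNNReal • Real.exp (σ * x)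
        = Real.exp (σ ^ 2 * v / 2) * gaussianPDFReal (σ * v) v x := by
      intro x
      have h0 : ((gaussianPDFReal 0 v x).toNNReal : ℝ) = gaussianPDFReal 0 v x :=
        Real.coe_toNNReal _ (gaussianPDFReal_nonneg 0 v x)
      rw [NNReal.smul_def, smul_eq_mul, h0]
      simp only [gaussianPDFReal]
      have harg : -(x - 0) ^ 2 / (2 * (v : ℝ)) + σ * x
          = -(x - σ * v) ^ 2 / (2 * (v : ℝ)) + σ ^ 2 * v / 2 := by
        field_simp
        ring
      rw [mul_assoc, ← Real.exp_add, harg, Real.exp_add, ← mul_assoc]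
      ring
    simp_rw [key]
    rw [integral_const_mul, integral_gaussianPDFReal_eq_one (σ * v) hv, mul_one]

/-- For the lognormal process `X(t) = x₀ exp[H(t₀,t) + σ(W(t) − W(t₀))]`, the
mean `m(t) = E[X(t)] = x₀ (η + e^{-Q(t₀)})/(η + e^{-Q(t)})` satisfies the
multi-sigmoidal logistic ODE `m'(t) = h(t) m(t)` with
`h(t) = Q'(t)e^{-Q(t)}/(η + e^{-Q(t)})`. -/
theorem lognormal_mean_multisigmoidal
    (η σ x₀ t₀ : ℝ) (hη : 0 < η) (hσ : 0 < σ) (hx₀ : 0 < x₀)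
    (Q Q' : ℝ → ℝ) (hQ : ∀ t, HasDerivAt Q (Q' t) t)
    (H : ℝ → ℝ → ℝ)
    (hH : ∀ s u, H s u =
      Real.log ((η + Real.exp (-Q s)) / (η + Real.exp (-Q u))) - σ ^ 2 / 2 * (u - s))
    {Ω : Type*} [MeasureSpace Ω] (P : Measure Ω) [IsProbabilityMeasure P]
    (W : ℝ → Ω → ℝ)
    (hWmeas : ∀ t, t₀ ≤ t → Measurable (fun ω => W t ω - W t₀ ω))
    (hWlaw : ∀ t, t₀ ≤ t → P.map (fun ω => W t ω - W t₀ ω) =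
      gaussianReal 0 (Real.toNNReal (t - t₀)))
    (X : ℝ → Ω → ℝ)
    (hX : ∀ u ω, X u ω = x₀ * Real.exp (H t₀ u + σ * (W u ω - W t₀ ω)))
    (m : ℝ → ℝ)
    (hm : ∀ t, m t = x₀ * (η + Real.exp (-Q t₀)) / (η + Real.exp (-Q t)))
    (h : ℝ → ℝ)
    (hh : ∀ t, h t = Q' t * Real.exp (-Q t) / (η + Real.exp (-Q t))) :
    (∀ t, t₀ ≤ t → ∫ ω, X t ω ∂P = m t)
    ∧ (∀ t, HasDerivAt m (h t * m t) t) := by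
  constructor
  · intro t ht
    have hA : 0 < η + Real.exp (-Q t₀) := by positivity
    have hB : 0 < η + Real.exp (-Q t) := by positivity
    have hint : ∫ ω, Real.exp (σ * (W t ω - W t₀ ω)) ∂P
        = Real.exp (σ ^ 2 * (t - t₀) / 2) := by
      have h1 : ∫ x, Real.exp (σ * x) ∂(P.map (fun ω => W t ω - W t₀ ω))
          = ∫ ω, Real.exp (σ * (W t ω - W t₀ ω)) ∂P :=
        integral_map (hWmeas t ht).aemeasurable ((Real.measurable_exp.comp (measurable_id.const_mul σ)).aestronglyMeasurable)
      rw [← h1, hWlaw t ht, gaussianReal_integral_exp,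
        Real.coe_toNNReal _ (sub_nonneg.mpr ht)]
    calc ∫ ω, X t ω ∂P
        = ∫ ω, (x₀ * Real.exp (H t₀ t)) * Real.exp (σ * (W t ω - W t₀ ω)) ∂P := by
          congr 1
          funext ω
          rw [hX, Real.exp_add]
          ring
      _ = (x₀ * Real.exp (H t₀ t)) * ∫ ω, Real.exp (σ * (W t ω - W t₀ ω)) ∂P :=
          integral_const_mul _ _
      _ = m t := by
          rw [hint, mul_assoc, ← Real.exp_add]
          have he : H t₀ t + σ ^ 2 * (t - t₀) / 2
              = Real.log ((η + Real.exp (-Q t₀)) / (η + Real.exp (-Q t))) := by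
            rw [hH]; ring
          rw [he, Real.exp_log (div_pos hA hB), hm]
          ring
  · intro t
    have hmf : m = fun s => x₀ * (η + Real.exp (-Q t₀)) / (η + Real.exp (-Q s)) :=
      funext hm
    have hB : 0 < η + Real.exp (-Q t) := by positivity
    have hd : HasDerivAt (fun s => η + Real.exp (-Q s))
        (Real.exp (-Q t) * (-Q' t)) t := (hQ t).neg.exp.const_add η
    have hder := (hasDerivAt_const t (x₀ * (η + Real.exp (-Q t₀)))).div hd hB.ne'
    rw [hmf]
    convert hder using 1
    · rfl
    · rfl
    · rfl
    rw [hh]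
    field_simp
    ring
end
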